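/- For paths P_n and P_m with n, m ≥ 3, the lexicographic product satisfies pc(P_n ∘ P_m) = 2. -/

import Mathlib

open SimpleGraph

/-- An edge-coloring with `k` colors is a proper-path coloring if every pair of distinct
vertices is joined by a path in which no two consecutive (adjacent) edges share a color. -/
def IsProperPathColoring {V : Type*} (G : SimpleGraph V) {k : ℕ} (c : Sym2 V → Fin k) : Prop :=
  ∀ u v : V, u ≠ v → ∃ p : G.Walk u v, p.IsPath ∧
    List.Chain' (fun e f => c e ≠ c f) p.edges

/-- The proper connection number: the minimum number of colors in a proper-path coloring. -/
noncomputable def pc {V : Type*} (G : SimpleGraph V) : ℕ :=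
  sInf {k | ∃ c : Sym2 V → Fin k, IsProperPathColoring G c}

/-- The lexicographic product `G ∘ H`. -/
def lexProd {V W : Type*} (G : SimpleGraph V) (H : SimpleGraph W) : SimpleGraph (V × W) where
  Adj x y := G.Adj x.1 y.1 ∨ (x.1 = y.1 ∧ H.Adj x.2 y.2)
  symm := by
    refine ⟨?_⟩
    rintro ⟨a, b⟩ ⟨a', b'⟩ (h | ⟨h1, h2⟩)
    · exact Or.inl h.symm
    · exact Or.inr ⟨h1.symm, h2.symm⟩
  loopless := by
    refine ⟨?_⟩
    rintro ⟨a, b⟩ (h | ⟨-, h⟩)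
    · exact G.irrefl h
    · exact H.irrefl h

/-- Auxiliary: a walk following a function `f : ℕ → V` from index `a` to `a + d`,
with explicit support and edge list. -/
lemma exists_walk_of_fn {V : Type*} {G : SimpleGraph V} (f : ℕ → V) :
    ∀ (d a : ℕ), (∀ k, a ≤ k → k < a + d → G.Adj (f k) (f (k+1))) →
    ∃ p : G.Walk (f a) (f (a + d)),
      p.support = (List.range (d+1)).map (fun k => f (a+k)) ∧
      p.edges = (List.range d).map (fun k => s(f (a+k), f (a+k+1))) := by
  intro d
  induction d with
  | zero => intro a _; exact ⟨SimpleGraph.Walk.nil, by simp [List.range_succ], by simp⟩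
  | succ e ih =>
    intro a hadj
    have h1 : G.Adj (f a) (f (a+1)) := hadj a le_rfl (by omega)
    obtain ⟨p, hs, he⟩ := ih (a+1) (fun k hk hk' => hadj k (by omega) (by omega))
    have hcast : a + 1 + e = a + (e+1) := by omega
    refine ⟨(SimpleGraph.Walk.cons h1 p).copy rfl (by rw [hcast]), ?_, ?_⟩
    · rw [SimpleGraph.Walk.support_copy, SimpleGraph.Walk.support_cons, hs]
      conv_rhs => rw [List.range_succ_eq_map, List.map_cons, List.map_map]
      congr 1
      congr 1
      funext k
      simp only [Function.comp_apply]
      congr 1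
      omega
    · rw [SimpleGraph.Walk.edges_copy, SimpleGraph.Walk.edges_cons, he]
      conv_rhs => rw [List.range_succ_eq_map, List.map_cons, List.map_map]
      congr 1
      congr 1
      funext k
      simp only [Function.comp_apply]
      have h2 : a + 1 + k = a + (k + 1) := by omega
      rw [h2]

/-- Auxiliary: a properly-colored path following a function `f : ℕ → V`. -/
lemma exists_good_walk {V : Type*} {G : SimpleGraph V} (f : ℕ → V) {k : ℕ}
    (c : Sym2 V → Fin k) (a d : ℕ)
    (hadj : ∀ j, a ≤ j → j < a + d → G.Adj (f j) (f (j+1)))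
    (hinj : ∀ j l, a ≤ j → j < l → l ≤ a + d → f j ≠ f l)
    (hcol : ∀ j, a ≤ j → j + 1 < a + d → c s(f j, f (j+1)) ≠ c s(f (j+1), f (j+2))) :
    ∃ p : G.Walk (f a) (f (a + d)), p.IsPath ∧
      List.Chain' (fun e f => c e ≠ c f) p.edges := by
  obtain ⟨p, hs, he⟩ := exists_walk_of_fn f d a hadj
  refine ⟨p, ?_, ?_⟩
  · rw [SimpleGraph.Walk.isPath_def, hs]
    apply List.Nodup.map_on _ List.nodup_range
    intro x hx y hy hxy
    simp only [List.mem_range] at hx hy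
    by_contra hne
    rcases lt_or_gt_of_ne hne with h | h
    · exact hinj (a+x) (a+y) (by omega) (by omega) (by omega) hxy
    · exact hinj (a+y) (a+x) (by omega) (by omega) (by omega) hxy.symm
  · rw [he, List.Chain', List.isChain_map]
    rcases d with _ | e
    · simp
    · rw [List.isChain_range_succ]
      intro j hj
      have := hcol (a + j) (by omega) (by omega)
      have e1 : a + j.succ = a + j + 1 := by omega
      rw [e1]
      exact this

/-- Reverse direction of a properly-colored path. -/
lemma good_walk_symm {V : Type*} {G : SimpleGraph V} {k : ℕ} {c : Sym2 V → Fin k} {u v : V}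
    (h : ∃ p : G.Walk u v, p.IsPath ∧ List.Chain' (fun e f => c e ≠ c f) p.edges) :
    ∃ p : G.Walk v u, p.IsPath ∧ List.Chain' (fun e f => c e ≠ c f) p.edges := by
  obtain ⟨p, hp, hc⟩ := h
  refine ⟨p.reverse, hp.reverse, ?_⟩
  rw [SimpleGraph.Walk.edges_reverse, List.Chain', List.isChain_reverse]
  exact hc.imp (fun a b h => Ne.symm h)

/-- The 2-coloring of the lexicographic product of two paths. -/
def myc (n m : ℕ) (hn : 0 < n) (hm : 0 < m) : Sym2 (Fin n × Fin m) → Fin 2 :=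
  Sym2.lift ⟨fun x y =>
      if x.1 = y.1 then (⟨min x.2.val y.2.val % 2, Nat.mod_lt _ (by norm_num)⟩ : Fin 2)
      else (⟨min x.1.val y.1.val % 2, Nat.mod_lt _ (by norm_num)⟩ : Fin 2), by
    intro x y
    dsimp only
    by_cases h : x.1 = y.1
    · rw [if_pos h, if_pos h.symm, min_comm]
    · rw [if_neg h, if_neg (fun e => h e.symm), min_comm]⟩

theorem stmt15 (n m : ℕ) (hn : 3 ≤ n) (hm : 3 ≤ m) :
    pc (lexProd (pathGraph n) (pathGraph m)) = 2 := by
  have hn0 : 0 < n := by omega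
  have hm0 : 0 < m := by omega
  set G := lexProd (pathGraph n) (pathGraph m) with hG
  set c := myc n m hn0 hm0 with hc
  -- the color of an edge
  have hc_eq : ∀ x y : Fin n × Fin m, c s(x, y) =
      (if x.1 = y.1 then (⟨min x.2.val y.2.val % 2, Nat.mod_lt _ (by norm_num)⟩ : Fin 2)
      else (⟨min x.1.val y.1.val % 2, Nat.mod_lt _ (by norm_num)⟩ : Fin 2)) := by
    intro x y
    rfl
  have hmem : 2 ∈ {k | ∃ c : Sym2 (Fin n × Fin m) → Fin k, IsProperPathColoring G c} := by
    refine ⟨c, ?_⟩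
    rintro ⟨i, j⟩ ⟨i', j'⟩ hne
    -- a key general claim: for any two vertices with i.val < i'.val or
    -- (i = i' and j.val < j'.val), a good walk exists
    have key : ∀ (i i' : Fin n) (j j' : Fin m),
        (i.val < i'.val ∨ (i = i' ∧ j.val < j'.val)) →
        ∃ p : G.Walk (i, j) (i', j'), p.IsPath ∧
          List.Chain' (fun e f => c e ≠ c f) p.edges := by
      rintro i i' j j' (hlt | ⟨rfl, hlt⟩)
      · -- cross-column walk
        set f : ℕ → Fin n × Fin m :=
          fun k => ((⟨k % n, Nat.mod_lt _ hn0⟩ : Fin n), if k = i.val then j else j') with hf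
        have hd : 1 ≤ i'.val - i.val := by omega
        have hfa : f i.val = (i, j) := by
          simp only [hf, if_pos rfl]
          congr 1
          exact Fin.ext (Nat.mod_eq_of_lt i.isLt)
        have hfb : f (i.val + (i'.val - i.val)) = (i', j') := by
          have h1 : i.val + (i'.val - i.val) = i'.val := by omega
          rw [h1]
          simp only [hf, if_neg (by omega : ¬ i'.val = i.val)]
          congr 1
          exact Fin.ext (Nat.mod_eq_of_lt i'.isLt)
        have h := exists_good_walk (G := G) f c i.val (i'.val - i.val)
          (by
            intro k hk hk'
            have hk1 : k < n := by omega
            have hk2 : k + 1 < n := by omega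
            left
            rw [pathGraph_adj]
            left
            simp only [hf]
            rw [Nat.mod_eq_of_lt hk1, Nat.mod_eq_of_lt hk2])
          (by
            intro k l hk hkl hl
            have hk1 : k < n := by omega
            have hl1 : l < n := by omega
            intro hfe
            have := congrArg (fun x => (x.1 : Fin n).val) hfe
            simp only [hf] at this
            rw [Nat.mod_eq_of_lt hk1, Nat.mod_eq_of_lt hl1] at this
            omega)
          (by
            intro k hk hk'
            have hk1 : k < n := by omega
            have hk2 : k + 1 < n := by omega
            have hk3 : k + 2 < n := by omega
            rw [hc_eq, hc_eq]
            have h12 : k % n ≠ (k+1) % n := by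
              rw [Nat.mod_eq_of_lt hk1, Nat.mod_eq_of_lt hk2]; omega
            have h23 : (k+1) % n ≠ (k+2) % n := by
              rw [Nat.mod_eq_of_lt hk2, Nat.mod_eq_of_lt hk3]; omega
            simp only [hf, Fin.mk.injEq]
            rw [if_neg h12, if_neg h23]
            simp only [ne_eq, Fin.mk.injEq, Nat.mod_eq_of_lt hk1, Nat.mod_eq_of_lt hk2,
              Nat.mod_eq_of_lt hk3]
            omega)
        rw [hfa, hfb] at h
        exact h
      · -- same column walk
        set f : ℕ → Fin n × Fin m :=
          fun k => (i, (⟨k % m, Nat.mod_lt _ hm0⟩ : Fin m)) with hf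
        have hfa : f j.val = (i, j) := by
          simp only [hf]
          congr 1
          exact Fin.ext (Nat.mod_eq_of_lt j.isLt)
        have hfb : f (j.val + (j'.val - j.val)) = (i, j') := by
          have h1 : j.val + (j'.val - j.val) = j'.val := by omega
          rw [h1]
          simp only [hf]
          congr 1
          exact Fin.ext (Nat.mod_eq_of_lt j'.isLt)
        have h := exists_good_walk (G := G) f c j.val (j'.val - j.val)
          (by
            intro k hk hk'
            have hk1 : k < m := by omega
            have hk2 : k + 1 < m := by omega
            right
            refine ⟨rfl, ?_⟩
            rw [pathGraph_adj]
            left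
            simp only [hf]
            rw [Nat.mod_eq_of_lt hk1, Nat.mod_eq_of_lt hk2])
          (by
            intro k l hk hkl hl
            have hk1 : k < m := by omega
            have hl1 : l < m := by omega
            intro hfe
            have := congrArg (fun x => (x.2 : Fin m).val) hfe
            simp only [hf] at this
            rw [Nat.mod_eq_of_lt hk1, Nat.mod_eq_of_lt hl1] at this
            omega)
          (by
            intro k hk hk'
            have hk1 : k < m := by omega
            have hk2 : k + 1 < m := by omega
            have hk3 : k + 2 < m := by omega
            rw [hc_eq, hc_eq]
            simp only [hf]
            rw [if_pos trivial, if_pos trivial]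
            simp only [ne_eq, Fin.mk.injEq, Nat.mod_eq_of_lt hk1, Nat.mod_eq_of_lt hk2,
              Nat.mod_eq_of_lt hk3]
            omega)
        rw [hfa, hfb] at h
        exact h
    rcases lt_trichotomy i.val i'.val with h | h | h
    · exact key i i' j j' (Or.inl h)
    · have hii : i = i' := Fin.ext h
      subst hii
      have hjj : j ≠ j' := by
        intro hEq; exact hne (by rw [hEq])
      rcases lt_trichotomy j.val j'.val with h2 | h2 | h2
      · exact key i i j j' (Or.inr ⟨rfl, h2⟩)
      · exact absurd (Fin.ext h2) hjj
      · exact good_walk_symm (key i i j' j (Or.inr ⟨rfl, h2⟩))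
    · exact good_walk_symm (key i' i j' j (Or.inl h))
  apply le_antisymm
  · exact Nat.sInf_le hmem
  · refine le_csInf ⟨2, hmem⟩ ?_
    intro k hk
    obtain ⟨cc, hcc⟩ := hk
    by_contra hlt
    push_neg at hlt
    interval_cases k
    · exact (cc s(((⟨0, by omega⟩ : Fin n), (⟨0, by omega⟩ : Fin m)),
        ((⟨0, by omega⟩ : Fin n), (⟨0, by omega⟩ : Fin m)))).elim0
    · -- one color: take two vertices at distance ≥ 2
      set u : Fin n × Fin m := ((⟨0, by omega⟩ : Fin n), (⟨0, by omega⟩ : Fin m)) with hu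
      set v : Fin n × Fin m := ((⟨2, by omega⟩ : Fin n), (⟨0, by omega⟩ : Fin m)) with hv
      have huv : u ≠ v := by
        simp only [hu, hv, ne_eq, Prod.mk.injEq, Fin.mk.injEq]
        omega
      have hnadj : ¬ G.Adj u v := by
        rintro (h | ⟨h1, h2⟩)
        · rw [pathGraph_adj] at h
          simp only [hu, hv] at h
          omega
        · simp only [hu, hv, Fin.mk.injEq] at h1
          omega
      clear hu hv
      clear_value u v
      obtain ⟨p, hp, hchain⟩ := hcc u v huv
      cases p with
      | nil => exact huv rfl
      | cons h q =>
        cases q with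
        | nil => exact hnadj h
        | cons h' q' =>
          rw [SimpleGraph.Walk.edges_cons, SimpleGraph.Walk.edges_cons] at hchain
          have := hchain.rel_head
          exact this (Subsingleton.elim _ _)
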